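/- In a 3-connected 3-regular graph, every nontrivial 3-cut is a matching, and any two 3-cuts are laminar (non-crossing). -/

import Mathlib

/-- The underlying simple graph of a multigraph given by `ends`. -/
def toSimple {V E : Type} (ends : E → Sym2 V) : SimpleGraph V where
  Adj u w := u ≠ w ∧ ∃ e, ends e = s(u, w)
  symm := by
    constructor
    rintro u w ⟨hne, e, he⟩
    exact ⟨hne.symm, e, by rw [he]; exact Sym2.eq_swap⟩
  loopless := by constructor; rintro u ⟨hne, -⟩; exact hne rfl

/-- The edge cut `∂(X)`. -/
def Cut {V E : Type} (ends : E → Sym2 V) (X : Set V) : Set E :=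
  {e | ∃ u ∈ X, ∃ w, w ∉ X ∧ ends e = s(u, w)}

/-- Degree of a vertex (counting multiplicities). -/
noncomputable def deg {V E : Type} (ends : E → Sym2 V) (v : V) : ℕ :=
  {e | v ∈ ends e}.ncard

/-- `G` is 3-connected: connected, and removing any set of at most two vertices
(that does not remove everything) leaves it connected. -/
def ThreeConnected {V E : Type} (ends : E → Sym2 V) : Prop :=
  (toSimple ends).Connected ∧
    ∀ S : Set V, S.ncard ≤ 2 → Sᶜ.Nonempty → ((toSimple ends).induce Sᶜ).Connected

/-!
Edge-connectivity is at least 3: if `|∂X| ≤ 2` with both shores of size at least 2 (a singleton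
shore has cut of size 3), pick an `X`-end `u` of one cut edge and an `Xᶜ`-end `w` of the other;
`G - {u, w}` still meets both shores but has no edge between them.

If two edges of a 3-cut `∂X` share `v ∈ X`, then `∂(X \ {v})` loses both and gains at most one
edge, so it has at most 2 edges.

If `X` and `Y` cross, the four corner cuts have size at least 3, so submodularity makes
`∂(X ∩ Y)` and `∂(X ∩ Yᶜ)` 3-cuts. But for disjoint `A`, `B` we have
`|∂A| + |∂B| ≡ |∂(A ∪ B)| (mod 2)`, and `3 + 3 ≢ 3`.
-/

section Cut

variable {V E : Type} {ends : E → Sym2 V}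

theorem mem_cut_iff_of_ends_eq {e : E} {a b : V} (hab : ends e = s(a, b)) (Z : Set V) :
    e ∈ Cut ends Z ↔ (a ∈ Z ∧ b ∉ Z) ∨ (b ∈ Z ∧ a ∉ Z) := by
  constructor
  · rintro ⟨u, hu, w, hw, he⟩
    rw [hab, Sym2.eq_iff] at he
    rcases he with ⟨rfl, rfl⟩ | ⟨rfl, rfl⟩
    exacts [Or.inl ⟨hu, hw⟩, Or.inr ⟨hu, hw⟩]
  · rintro (⟨ha, hb⟩ | ⟨hb, ha⟩)
    · exact ⟨a, ha, b, hb, hab⟩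
    · exact ⟨b, hb, a, ha, hab.trans Sym2.eq_swap⟩

theorem exists_ends_eq (e : E) : ∃ a b, ends e = s(a, b) :=
  Sym2.ind (f := fun z => ∃ a b, z = s(a, b)) (fun a b => ⟨a, b, rfl⟩) (ends e)

@[simp]
theorem cut_compl (X : Set V) : Cut ends Xᶜ = Cut ends X := by
  ext e
  obtain ⟨a, b, hab⟩ := exists_ends_eq (ends := ends) e
  simp only [mem_cut_iff_of_ends_eq hab, Set.mem_compl_iff, not_not]
  tauto

theorem cut_singleton (hloop : ∀ e, ¬ (ends e).IsDiag) (x : V) :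
    Cut ends {x} = {e | x ∈ ends e} := by
  ext e
  obtain ⟨a, b, hab⟩ := exists_ends_eq (ends := ends) e
  have hne : a ≠ b := fun h => hloop e (by simp [hab, h])
  simp only [mem_cut_iff_of_ends_eq hab, Set.mem_singleton_iff, Set.mem_ofPred_eq, hab,
    Sym2.mem_iff]
  constructor
  · rintro (⟨rfl, -⟩ | ⟨rfl, -⟩) <;> simp
  · rintro (rfl | rfl)
    exacts [Or.inl ⟨rfl, hne.symm⟩, Or.inr ⟨rfl, hne⟩]

theorem ncard_cut_inter_add_ncard_cut_union_le [Finite E] (X Y : Set V) :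
    (Cut ends (X ∩ Y)).ncard + (Cut ends (X ∪ Y)).ncard ≤
      (Cut ends X).ncard + (Cut ends Y).ncard := by
  have hunion : Cut ends (X ∩ Y) ∪ Cut ends (X ∪ Y) ⊆ Cut ends X ∪ Cut ends Y := by
    intro e
    obtain ⟨a, b, hab⟩ := exists_ends_eq (ends := ends) e
    simp only [Set.mem_union, Set.mem_inter_iff, mem_cut_iff_of_ends_eq hab]
    tauto
  have hinter : Cut ends (X ∩ Y) ∩ Cut ends (X ∪ Y) ⊆ Cut ends X ∩ Cut ends Y := by
    intro e
    obtain ⟨a, b, hab⟩ := exists_ends_eq (ends := ends) e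
    simp only [Set.mem_union, Set.mem_inter_iff, mem_cut_iff_of_ends_eq hab]
    tauto
  rw [← Set.ncard_union_add_ncard_inter, ← Set.ncard_union_add_ncard_inter (Cut ends X)]
  exact add_le_add (Set.ncard_le_ncard hunion) (Set.ncard_le_ncard hinter)

-- For disjoint `A`, `B`, the cut `∂(A ∪ B)` is the symmetric difference of `∂A` and `∂B`.
theorem ncard_cut_add_ncard_cut_of_disjoint [Finite E] {A B : Set V} (hAB : Disjoint A B) :
    (Cut ends A).ncard + (Cut ends B).ncard =
      (Cut ends (A ∪ B)).ncard + 2 * (Cut ends A ∩ Cut ends B).ncard := by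
  have hunion : Cut ends A ∪ Cut ends B =
      Cut ends (A ∪ B) ∪ (Cut ends A ∩ Cut ends B) := by
    ext e
    obtain ⟨a, b, hab⟩ := exists_ends_eq (ends := ends) e
    have ha : a ∈ A → a ∉ B := fun h => Set.disjoint_left.mp hAB h
    have hb : b ∈ A → b ∉ B := fun h => Set.disjoint_left.mp hAB h
    simp only [Set.mem_union, Set.mem_inter_iff, mem_cut_iff_of_ends_eq hab]
    tauto
  have hdisj : Disjoint (Cut ends (A ∪ B)) (Cut ends A ∩ Cut ends B) := by
    refine Set.disjoint_left.mpr fun e => ?_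
    obtain ⟨a, b, hab⟩ := exists_ends_eq (ends := ends) e
    have ha : a ∈ A → a ∉ B := fun h => Set.disjoint_left.mp hAB h
    have hb : b ∈ A → b ∉ B := fun h => Set.disjoint_left.mp hAB h
    simp only [Set.mem_union, Set.mem_inter_iff, mem_cut_iff_of_ends_eq hab]
    tauto
  rw [← Set.ncard_union_add_ncard_inter, hunion, Set.ncard_union_eq hdisj]
  ring

theorem ncard_cut_sdiff_singleton_add_four_le [Finite E] {X : Set V} {v : V} (hv : v ∈ X)
    {e f : E} (he : e ∈ Cut ends X) (hf : f ∈ Cut ends X) (hef : e ≠ f)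
    (hve : v ∈ ends e) (hvf : v ∈ ends f) :
    (Cut ends (X \ {v})).ncard + 4 ≤ (Cut ends X).ncard + deg ends v := by
  have hsub : Cut ends (X \ {v}) ⊆ (Cut ends X \ {e, f}) ∪ ({g | v ∈ ends g} \ {e, f}) := by
    intro g hg
    obtain ⟨a, b, hab⟩ := exists_ends_eq (ends := ends) g
    have hvg : v ∈ ends g → g ∉ Cut ends X := by
      rw [hab, Sym2.mem_iff, mem_cut_iff_of_ends_eq hab]
      rw [mem_cut_iff_of_ends_eq hab] at hg
      simp only [Set.mem_sdiff, Set.mem_singleton_iff] at hg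
      rintro (rfl | rfl) <;> tauto
    have hgef : g ∉ ({e, f} : Set E) := by
      rintro (rfl | rfl)
      exacts [hvg hve he, hvg hvf hf]
    by_cases hvg' : v ∈ ends g
    · exact Or.inr ⟨hvg', hgef⟩
    · refine Or.inl ⟨?_, hgef⟩
      rw [hab, Sym2.mem_iff] at hvg'
      rw [mem_cut_iff_of_ends_eq hab] at hg ⊢
      simp only [Set.mem_sdiff, Set.mem_singleton_iff] at hg
      tauto
  have hcut := Set.ncard_sdiff_add_ncard_of_subset (s := {e, f}) (t := Cut ends X)
    (by rintro g (rfl | rfl) <;> assumption)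
  have hdeg := Set.ncard_sdiff_add_ncard_of_subset (s := {e, f}) (t := {g | v ∈ ends g})
    (by rintro g (rfl | rfl) <;> assumption)
  rw [Set.ncard_pair hef] at hcut hdeg
  have := (Set.ncard_le_ncard hsub).trans (Set.ncard_union_le _ _)
  unfold deg
  omega

end Cut

section ThreeConnected

variable {V E : Type} {ends : E → Sym2 V}

theorem three_le_ncard_of_forall_mem_cut_exists_mem_ends (h3c : ThreeConnected ends)
    {X S : Set V} (hcover : ∀ e ∈ Cut ends X, ∃ v ∈ S, v ∈ ends e)
    (hX : (X \ S).Nonempty) (hXc : (Xᶜ \ S).Nonempty) : 3 ≤ S.ncard := by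
  by_contra! hS
  obtain ⟨x, hxX, hxS⟩ := hX
  obtain ⟨y, hyX, hyS⟩ := hXc
  obtain ⟨p⟩ := (h3c.2 S (by omega) ⟨x, hxS⟩).preconnected ⟨x, hxS⟩ ⟨y, hyS⟩
  obtain ⟨d, -, hdX, hdX'⟩ := p.exists_boundary_dart (Subtype.val ⁻¹' X) hxX hyX
  obtain ⟨-, e, he⟩ := SimpleGraph.induce_adj.mp d.adj
  obtain ⟨v, hvS, hve⟩ := hcover e ((mem_cut_iff_of_ends_eq he X).mpr (Or.inl ⟨hdX, hdX'⟩))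
  rw [he, Sym2.mem_iff] at hve
  rcases hve with rfl | rfl
  exacts [d.fst.2 hvS, d.snd.2 hvS]

theorem exists_mem_cut_notMem_ends_and_notMem_ends (h3c : ThreeConnected ends) {X : Set V}
    (hX : 2 ≤ X.ncard) (hXc : 2 ≤ Xᶜ.ncard) {u w : V} (hu : u ∈ X) (hw : w ∉ X) :
    ∃ e ∈ Cut ends X, u ∉ ends e ∧ w ∉ ends e := by
  by_contra! hcover
  obtain ⟨x, hxX, hxu⟩ := Set.exists_ne_of_one_lt_ncard hX u
  obtain ⟨y, hyX, hyw⟩ := Set.exists_ne_of_one_lt_ncard hXc w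
  have h3 := three_le_ncard_of_forall_mem_cut_exists_mem_ends h3c (S := {u, w})
    (fun e he => by by_cases hue : u ∈ ends e <;> simp_all)
    ⟨x, hxX, by rintro (rfl | rfl) <;> contradiction⟩
    ⟨y, hyX, by rintro (rfl | rfl) <;> contradiction⟩
  have h2 := Set.ncard_insert_le u {w}
  rw [Set.ncard_singleton] at h2
  omega

theorem two_le_ncard_of_ncard_cut_lt_three [Finite V] (hloop : ∀ e, ¬ (ends e).IsDiag)
    (hreg : ∀ v, deg ends v = 3) {X : Set V} (hX : X.Nonempty)
    (hcut : (Cut ends X).ncard < 3) : 2 ≤ X.ncard := by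
  by_contra! hlt
  obtain ⟨x, rfl⟩ := (Set.ncard_eq_one (s := X)).mp (by have := (Set.ncard_pos).mpr hX; omega)
  rw [cut_singleton hloop] at hcut
  exact hcut.ne (hreg x)

theorem three_le_ncard_cut [Finite V] [Finite E] (hloop : ∀ e, ¬ (ends e).IsDiag)
    (hreg : ∀ v, deg ends v = 3) (h3c : ThreeConnected ends) {X : Set V}
    (hX : X.Nonempty) (hXc : Xᶜ.Nonempty) : 3 ≤ (Cut ends X).ncard := by
  by_contra! hlt
  have hX2 := two_le_ncard_of_ncard_cut_lt_three hloop hreg hX hlt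
  have hXc2 := two_le_ncard_of_ncard_cut_lt_three hloop hreg hXc (by rwa [cut_compl])
  obtain h0 | h1 | h2 : (Cut ends X).ncard = 0 ∨ (Cut ends X).ncard = 1 ∨
      (Cut ends X).ncard = 2 := by omega
  · have := three_le_ncard_of_forall_mem_cut_exists_mem_ends h3c (X := X) (S := ∅)
      (by simp [(Set.ncard_eq_zero).mp h0]) (by simpa using hX) (by simpa using hXc)
    simp at this
  · obtain ⟨e, he⟩ := Set.ncard_eq_one.mp h1
    obtain ⟨u, hu, w, hw, huw⟩ : e ∈ Cut ends X := he ▸ rfl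
    obtain ⟨g, hg, hug, hwg⟩ := exists_mem_cut_notMem_ends_and_notMem_ends h3c hX2 hXc2 hu hw
    rw [he, Set.mem_singleton_iff] at hg
    exact hug (hg ▸ huw ▸ Sym2.mem_mk_left u w)
  · obtain ⟨e, f, -, hef⟩ := Set.ncard_eq_two.mp h2
    obtain ⟨u, hu, _, -, hue⟩ : e ∈ Cut ends X := hef ▸ Set.mem_insert e {f}
    obtain ⟨_, -, w, hw, hwf⟩ : f ∈ Cut ends X := hef ▸ Set.mem_insert_of_mem e rfl
    obtain ⟨g, hg, hug, hwg⟩ := exists_mem_cut_notMem_ends_and_notMem_ends h3c hX2 hXc2 hu hw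
    rw [hef] at hg
    rcases hg with rfl | rfl
    exacts [hug (hue ▸ Sym2.mem_mk_left _ _), hwg (hwf ▸ Sym2.mem_mk_right _ _)]

end ThreeConnected

section ThreeRegular

variable {V E : Type} [Finite V] [Finite E] {ends : E → Sym2 V}

theorem not_mem_ends_and_mem_ends_of_ncard_cut_eq_three (hloop : ∀ e, ¬ (ends e).IsDiag)
    (hreg : ∀ v, deg ends v = 3) (h3c : ThreeConnected ends) {X : Set V}
    (h3 : (Cut ends X).ncard = 3) (hX : 2 ≤ X.ncard) (hXc : 2 ≤ Xᶜ.ncard)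
    {e f : E} (he : e ∈ Cut ends X) (hf : f ∈ Cut ends X) (hef : e ≠ f) (v : V) :
    ¬ (v ∈ ends e ∧ v ∈ ends f) := by
  rintro ⟨hve, hvf⟩
  wlog hv : v ∈ X generalizing X
  · exact this (X := Xᶜ) (by rwa [cut_compl]) hXc (by rwa [compl_compl])
      (by rwa [cut_compl]) (by rwa [cut_compl]) hv
  have hshrink := ncard_cut_sdiff_singleton_add_four_le hv he hf hef hve hvf
  have hconn := three_le_ncard_cut hloop hreg h3c (X := X \ {v})
    (let ⟨x, hxX, hxv⟩ := Set.exists_ne_of_one_lt_ncard hX v; ⟨x, hxX, hxv⟩)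
    (((Set.ncard_pos).mp (by omega)).mono (Set.compl_subset_compl.mpr Set.sdiff_subset))
  rw [h3, hreg] at hshrink
  omega

theorem cut_laminar_of_ncard_cut_eq_three (hloop : ∀ e, ¬ (ends e).IsDiag)
    (hreg : ∀ v, deg ends v = 3) (h3c : ThreeConnected ends) {X Y : Set V}
    (hX : (Cut ends X).ncard = 3) (hY : (Cut ends Y).ncard = 3) :
    X ∩ Y = ∅ ∨ X ∩ Yᶜ = ∅ ∨ Xᶜ ∩ Y = ∅ ∨ Xᶜ ∩ Yᶜ = ∅ := by
  by_contra! h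
  obtain ⟨h1, h2, h3, h4⟩ := h
  have c1 := three_le_ncard_cut hloop hreg h3c (X := X ∩ Y) h1
    (h4.mono fun z hz hz' => hz.1 hz'.1)
  have c2 := three_le_ncard_cut hloop hreg h3c (X := X ∪ Y)
    (h1.mono (Set.inter_subset_left.trans Set.subset_union_left)) (by rwa [Set.compl_union])
  have c3 := three_le_ncard_cut hloop hreg h3c (X := X ∩ Yᶜ) h2
    (h3.mono fun z hz hz' => hz.1 hz'.1)
  have c4 := three_le_ncard_cut hloop hreg h3c (X := X ∪ Yᶜ)
    (h2.mono (Set.inter_subset_left.trans Set.subset_union_left))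
    (by rwa [Set.compl_union, compl_compl])
  have s1 := ncard_cut_inter_add_ncard_cut_union_le (ends := ends) X Y
  have s2 := ncard_cut_inter_add_ncard_cut_union_le (ends := ends) X Yᶜ
  have hpar := ncard_cut_add_ncard_cut_of_disjoint (ends := ends)
    (Set.disjoint_left.mpr fun z hz hz' => hz'.2 hz.2 : Disjoint (X ∩ Y) (X ∩ Yᶜ))
  rw [Set.inter_union_compl] at hpar
  rw [cut_compl] at s2
  omega

end ThreeRegular

/-- In a 3-connected 3-regular multigraph: every nontrivial 3-cut is a matching
(no two of its edges share a vertex), and any two 3-cuts are laminar (some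
quadrant of their shores is empty). -/
theorem stmt15 {V E : Type} [Fintype V] [Fintype E]
    (ends : E → Sym2 V) (hloop : ∀ e, ¬ (ends e).IsDiag)
    (hreg : ∀ v, deg ends v = 3) (h3c : ThreeConnected ends) :
    (∀ X : Set V, (Cut ends X).ncard = 3 → 2 ≤ X.ncard → 2 ≤ Xᶜ.ncard →
        ∀ e ∈ Cut ends X, ∀ f ∈ Cut ends X, e ≠ f →
          ∀ v : V, ¬ (v ∈ ends e ∧ v ∈ ends f)) ∧
      (∀ X Y : Set V, (Cut ends X).ncard = 3 → (Cut ends Y).ncard = 3 →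
        X ∩ Y = ∅ ∨ X ∩ Yᶜ = ∅ ∨ Xᶜ ∩ Y = ∅ ∨ Xᶜ ∩ Yᶜ = ∅) :=
  ⟨fun _ h3 hX hXc _ he _ hf hef =>
      not_mem_ends_and_mem_ends_of_ncard_cut_eq_three hloop hreg h3c h3 hX hXc he hf hef,
    fun _ _ hX hY => cut_laminar_of_ncard_cut_eq_three hloop hreg h3c hX hY⟩
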